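/- Let k ⊂ L be a finite Galois extension with Galois group G. If [L : k] = p₁^{e₁} ⋯ p_m^{e_m} and the subgroup lattice of G (equivalently, the lattice of intermediate fields) is distributive, then G is cyclic, the length of the lattice of intermediate fields equals e₁ + ⋯ + e_m, and the number of intermediate fields equals the number of divisors of [L : k]. -/

import Mathlib

/-!
The Galois correspondence identifies the intermediate fields with the dual of the subgroup lattice
of `G`, so the subgroup lattice of `G` is distributive. Ore's argument then shows that `G` is
abelian, and in an abelian group with distributive subgroup lattice there is at most one subgroup of
each prime order, which forces `G` to be cyclic. In a cyclic group of order `n` the subgroups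
correspond to the divisors of `n`, ordered by divisibility: there are `τ(n)` of them, and a maximal
chain has length `Ω(n) = e₁ + ⋯ + e_m`.
-/

open Subgroup
open scoped ArithmeticFunction.Omega

theorem sup_inf_left_of_inf_sup_left {α : Type*} [Lattice α]
    (h : ∀ a b c : α, a ⊓ (b ⊔ c) = a ⊓ b ⊔ a ⊓ c) (a b c : α) :
    a ⊔ b ⊓ c = (a ⊔ b) ⊓ (a ⊔ c) :=
  letI := DistribLattice.ofInfSupLe fun a b c => (h a b c).le
  sup_inf_left a b c

theorem OrderIso.inf_sup_left_of_sup_inf_left {α β : Type*} [Lattice α] [Lattice β]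
    (e : α ≃o βᵒᵈ) (h : ∀ a b c : α, a ⊔ b ⊓ c = (a ⊔ b) ⊓ (a ⊔ c)) (a b c : β) :
    a ⊓ (b ⊔ c) = a ⊓ b ⊔ a ⊓ c := by
  have := h (e.symm (OrderDual.toDual a)) (e.symm (OrderDual.toDual b))
    (e.symm (OrderDual.toDual c))
  simp only [← map_inf, ← map_sup, ← toDual_inf, ← toDual_sup] at this
  exact OrderDual.toDual.injective (e.symm.injective this)

namespace Subgroup

variable {G : Type*} [Group G]

theorem zpowers_mul_sup_zpowers_left (a b : G) :
    zpowers (a * b) ⊔ zpowers a = zpowers a ⊔ zpowers b := by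
  refine le_antisymm (sup_le ?_ le_sup_left) (sup_le le_sup_right ?_) <;> rw [zpowers_le]
  · exact mul_mem (mem_sup_left (mem_zpowers a)) (mem_sup_right (mem_zpowers b))
  · simpa using mul_mem (inv_mem (mem_sup_right (mem_zpowers a)))
      (mem_sup_left (mem_zpowers (a * b)))

theorem zpowers_mul_sup_zpowers_right (a b : G) :
    zpowers (a * b) ⊔ zpowers b = zpowers a ⊔ zpowers b := by
  refine le_antisymm (sup_le ?_ le_sup_right) (sup_le ?_ le_sup_right) <;> rw [zpowers_le]
  · exact mul_mem (mem_sup_left (mem_zpowers a)) (mem_sup_right (mem_zpowers b))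
  · simpa using mul_mem (mem_sup_left (mem_zpowers (a * b)))
      (inv_mem (mem_sup_right (mem_zpowers b)))

/-- Ore: `⟨ab⟩ ⊔ (⟨a⟩ ⊓ ⟨b⟩) = ⟨a, b⟩` by distributivity, and the right-hand side is generated by
pairwise commuting elements, since `⟨a⟩ ⊓ ⟨b⟩` commutes with both `a` and `b`. -/
theorem commute_of_sup_inf_left (h : ∀ A B C : Subgroup G, A ⊔ B ⊓ C = (A ⊔ B) ⊓ (A ⊔ C))
    (a b : G) : Commute a b := by
  set D := zpowers a ⊓ zpowers b
  have hgen : closure ((zpowers (a * b) : Set G) ∪ D) = zpowers a ⊔ zpowers b := by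
    rw [closure_union, closure_eq, closure_eq, h, zpowers_mul_sup_zpowers_left,
      zpowers_mul_sup_zpowers_right, inf_idem]
  have hD : ∀ d ∈ D, Commute d (a * b) := by
    rintro d ⟨hda, hdb⟩
    obtain ⟨i, rfl⟩ := mem_zpowers_iff.mp hda
    obtain ⟨j, hj⟩ := mem_zpowers_iff.mp hdb
    exact ((Commute.refl a).zpow_left i).mul_right (hj ▸ (Commute.refl b).zpow_left j)
  have hcomm : ∀ x ∈ (zpowers (a * b) : Set G) ∪ D, ∀ y ∈ (zpowers (a * b) : Set G) ∪ D,
      x * y = y * x := by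
    rintro x (⟨k, rfl⟩ | hx) y (⟨l, rfl⟩ | hy)
    · exact Commute.zpow_zpow_self (a * b) k l
    · exact ((hD y hy).zpow_right k).symm.eq
    · exact ((hD x hx).zpow_right l).eq
    · obtain ⟨⟨i, rfl⟩, -⟩ := hx
      obtain ⟨⟨j, rfl⟩, -⟩ := hy
      exact Commute.zpow_zpow_self a i j
  have : IsMulCommutative (zpowers a ⊔ zpowers b : Subgroup G) :=
    hgen ▸ isMulCommutative_closure hcomm
  exact setLike_mul_comm (mem_sup_left (mem_zpowers a)) (mem_sup_right (mem_zpowers b))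

theorem zpowers_inf_eq_bot_of_prime {x : G} (hx : (orderOf x).Prime) {H : Subgroup G}
    (hxH : x ∉ H) : zpowers x ⊓ H = ⊥ := by
  have : Finite (zpowers x) := Nat.finite_of_card_ne_zero (by simpa using hx.ne_zero)
  rcases hx.eq_one_or_self_of_dvd _ (Nat.card_zpowers x ▸ card_dvd_of_le inf_le_left) with h | h
  · exact eq_bot_of_card_eq _ h
  · have := eq_of_le_of_card_ge (inf_le_left : zpowers x ⊓ H ≤ _) (by rw [h, Nat.card_zpowers])
    exact absurd (inf_eq_left.mp this (mem_zpowers x)) hxH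

theorem mem_zpowers_comm_of_prime {x y : G} (hx : (orderOf x).Prime) (hy : (orderOf y).Prime)
    (hxy : x ∈ zpowers y) : y ∈ zpowers x := by
  by_contra hyx
  have := zpowers_inf_eq_bot_of_prime hy hyx
  have hx1 : x ∈ zpowers y ⊓ zpowers x := ⟨hxy, mem_zpowers x⟩
  rw [this, mem_bot] at hx1
  exact hx.one_lt.ne' (orderOf_eq_one_iff.mpr hx1)

/-- Two distinct commuting subgroups `⟨x⟩, ⟨y⟩` of prime order `p` would span a third one, `⟨xy⟩`,
which meets both trivially: this contradicts distributivity. -/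
theorem mem_zpowers_of_inf_sup_left (h : ∀ A B C : Subgroup G, A ⊓ (B ⊔ C) = A ⊓ B ⊔ A ⊓ C)
    {p : ℕ} (hp : p.Prime) {x y : G} (hxy : Commute x y) (hx : orderOf x = p)
    (hy : orderOf y = p) : y ∈ zpowers x := by
  have : Fact p.Prime := ⟨hp⟩
  by_contra hyx
  have hxy' : x ∉ zpowers y := fun h => hyx (mem_zpowers_comm_of_prime (hx ▸ hp) (hy ▸ hp) h)
  have hw1 : x * y ≠ 1 := fun h => hyx (eq_inv_of_mul_eq_one_right h ▸ inv_mem (mem_zpowers x))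
  have hw : orderOf (x * y) = p :=
    orderOf_eq_prime (by rw [hxy.mul_pow, ← hx, pow_orderOf_eq_one, one_mul, hx, ← hy,
      pow_orderOf_eq_one]) hw1
  have hwx : x * y ∉ zpowers x := fun h => hyx (by simpa using mul_mem (inv_mem (mem_zpowers x)) h)
  have hwy : x * y ∉ zpowers y := fun h => hxy' (by simpa using mul_mem h (inv_mem (mem_zpowers y)))
  have hle : zpowers (x * y) ≤ zpowers x ⊔ zpowers y :=
    zpowers_le.mpr (mul_mem (mem_sup_left (mem_zpowers x)) (mem_sup_right (mem_zpowers y)))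
  have hbot : zpowers (x * y) = ⊥ := by
    rw [← inf_eq_left.mpr hle, h, zpowers_inf_eq_bot_of_prime (hw ▸ hp) hwx,
      zpowers_inf_eq_bot_of_prime (hw ▸ hp) hwy, sup_bot_eq]
  exact hw1 (zpowers_eq_bot.mp hbot)

theorem exists_pow_prime_mem_of_notMem [Finite G] {H : Subgroup G} {x : G} (hx : x ∉ H) :
    ∃ y ∉ H, ∃ p, p.Prime ∧ p ∣ orderOf y ∧ y ^ p ∈ H := by
  induction hn : orderOf x using Nat.strong_induction_on generalizing x with
  | _ n ih =>
    have hx1 : orderOf x ≠ 1 := fun h => hx (orderOf_eq_one_iff.mp h ▸ H.one_mem)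
    have hp := Nat.minFac_prime hx1
    by_cases hxp : x ^ (orderOf x).minFac ∈ H
    · exact ⟨x, hx, _, hp, Nat.minFac_dvd _, hxp⟩
    · refine ih _ ?_ hxp rfl
      rw [orderOf_pow_of_dvd hp.ne_zero (Nat.minFac_dvd _), ← hn]
      exact Nat.div_lt_self (orderOf_pos x) hp.one_lt

end Subgroup

theorem natCast_dvd_of_pow_eq_zpow {G : Type*} [Group G] [Finite G] {g y : G}
    (hg : orderOf g = Monoid.exponent G) {p : ℕ} (hp : p ∣ orderOf g) {m : ℤ}
    (h : y ^ p = g ^ m) : (p : ℤ) ∣ m := by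
  obtain ⟨q, hq⟩ := hp
  have hq0 : (q : ℤ) ≠ 0 := by
    have := orderOf_pos g
    rw [hq] at this
    exact_mod_cast (Nat.pos_of_mul_pos_left this).ne'
  have h1 : g ^ (m * q) = 1 := by
    rw [zpow_mul, ← h, zpow_natCast, ← pow_mul, ← hq, hg, Monoid.pow_exponent_eq_one]
  have h2 := orderOf_dvd_iff_zpow_eq_one.mpr h1
  rw [hq] at h2
  exact Int.dvd_of_mul_dvd_mul_right hq0 (by exact_mod_cast h2)

/-- Take `g` of maximal order `e`. If `g` does not generate, some `y ∉ ⟨g⟩` has `y ^ p ∈ ⟨g⟩`;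
correcting `y` by a power of `g` gives an element of order `p` outside `⟨g⟩`, while
`g ^ (e / p)` is one inside. -/
theorem CommGroup.isCyclic_of_mem_zpowers_of_orderOf_eq_prime {G : Type*} [CommGroup G] [Finite G]
    (h : ∀ p, p.Prime → ∀ x y : G, orderOf x = p → orderOf y = p → y ∈ zpowers x) :
    IsCyclic G := by
  obtain ⟨g, hg⟩ := Monoid.exists_orderOf_eq_exponent (Monoid.ExponentExists.of_finite (G := G))
  refine ⟨g, fun x => ?_⟩
  by_contra hx
  change x ∉ zpowers g at hx
  obtain ⟨y, hy, p, hp, hpy, hyp⟩ := exists_pow_prime_mem_of_notMem hx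
  have : Fact p.Prime := ⟨hp⟩
  have hpg : p ∣ orderOf g := hg ▸ hpy.trans (Monoid.order_dvd_exponent y)
  obtain ⟨m, hm⟩ := mem_zpowers_iff.mp hyp
  obtain ⟨k, rfl⟩ := natCast_dvd_of_pow_eq_zpow hg hpg hm.symm
  have hy' : orderOf (y * g ^ (-k)) = p := by
    refine orderOf_eq_prime ?_ fun h1 => hy ?_
    · rw [mul_pow, ← hm, ← zpow_natCast (g ^ (-k)), ← zpow_mul, ← zpow_add]
      simp [mul_comm]
    · rw [mul_eq_one_iff_eq_inv, ← zpow_neg, neg_neg] at h1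
      exact h1 ▸ zpow_mem (mem_zpowers g) k
  have hz : orderOf (g ^ (orderOf g / p)) = p := orderOf_pow_orderOf_div (orderOf_pos g).ne' hpg
  have hmem := zpowers_le.mpr (pow_mem (mem_zpowers g) _) (h p hp _ _ hz hy')
  exact hy (by simpa using mul_mem hmem (zpow_mem (mem_zpowers g) k))

theorem ArithmeticFunction.cardFactors_lt_of_dvd_of_ne {a b : ℕ} (hab : a ∣ b) (hne : a ≠ b)
    (hb : b ≠ 0) : Ω a < Ω b := by
  obtain ⟨c, rfl⟩ := hab
  have hc1 : 1 < c :=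
    Nat.one_lt_iff_ne_zero_and_ne_one.mpr ⟨right_ne_zero_of_mul hb, by rintro rfl; simp at hne⟩
  rw [cardFactors_mul (left_ne_zero_of_mul hb) (right_ne_zero_of_mul hb)]
  exact Nat.lt_add_of_pos_right (cardFactors_pos_iff_one_lt.mpr hc1)

theorem Order.krullDim_le_of_strictMono_nat {α : Type*} [Preorder α] (f : α → ℕ)
    (hf : StrictMono f) {m : ℕ} (hm : ∀ a, f a ≤ m) : krullDim α ≤ m := by
  calc krullDim α ≤ krullDim (Set.Iic m) :=
        krullDim_le_of_strictMono (fun a => ⟨f a, hm a⟩) fun _ _ h => hf h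
    _ = m := by rw [← height_eq_krullDim_Iic, height_nat]; rfl

namespace IsCyclic

variable {G : Type*} [Group G] [IsCyclic G] [Finite G]

/-- In a cyclic group of order `n` there are at most `d` solutions of `x ^ d = 1`, so a subgroup
of order `d` consists of all of them. -/
theorem coe_subgroup_eq_setOf_pow_card_eq_one (H : Subgroup G) :
    (H : Set G) = {x | x ^ Nat.card H = 1} := by
  classical
  have := Fintype.ofFinite G
  refine Set.eq_of_subset_of_ncard_le (fun x hx => ?_) ?_ (Set.toFinite _)
  · exact orderOf_dvd_iff_pow_eq_one.mp (H.orderOf_dvd_natCard hx)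
  · rw [← Nat.card_coe_set_eq (H : Set G), SetLike.coe_sort_coe, Set.ncard_eq_toFinset_card',
      Set.toFinset_ofPred]
    simpa using card_pow_eq_one_le (α := G) (Nat.card_pos (α := H))

theorem subgroup_le_iff_card_dvd {H K : Subgroup G} : H ≤ K ↔ Nat.card H ∣ Nat.card K := by
  refine ⟨card_dvd_of_le, fun hdvd x hx => ?_⟩
  rw [← SetLike.mem_coe, coe_subgroup_eq_setOf_pow_card_eq_one] at hx ⊢
  exact orderOf_dvd_iff_pow_eq_one.mp ((orderOf_dvd_iff_pow_eq_one.mpr hx).trans hdvd)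

theorem subgroup_lt_iff_card_dvd_ne {H K : Subgroup G} :
    H < K ↔ Nat.card H ∣ Nat.card K ∧ Nat.card H ≠ Nat.card K := by
  rw [lt_iff_le_and_ne, subgroup_le_iff_card_dvd]
  refine and_congr_right fun hdvd => not_congr ⟨fun h => h ▸ rfl, fun h => ?_⟩
  exact le_antisymm (subgroup_le_iff_card_dvd.mpr hdvd) (subgroup_le_iff_card_dvd.mpr (h ▸ dvd_rfl))

theorem exists_subgroup_card_eq {d : ℕ} (hd : d ∣ Nat.card G) :
    ∃ H : Subgroup G, Nat.card H = d := by
  obtain ⟨g, hg⟩ := exists_ofOrder_eq_natCard (α := G)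
  refine ⟨zpowers (g ^ (orderOf g / d)), ?_⟩
  rw [Nat.card_zpowers, orderOf_pow_orderOf_div (orderOf_pos g).ne' (hg ▸ hd)]

theorem card_subgroup : Nat.card (Subgroup G) = (Nat.card G).divisors.card := by
  have hbij : Function.Bijective fun H : Subgroup G =>
      (⟨Nat.card H, Nat.mem_divisors.mpr ⟨card_subgroup_dvd_card H, Nat.card_pos.ne'⟩⟩ :
        (Nat.card G).divisors) := by
    refine ⟨fun H K h => le_antisymm ?_ ?_, fun ⟨d, hd⟩ => ?_⟩
    · exact subgroup_le_iff_card_dvd.mpr (congrArg Subtype.val h).dvd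
    · exact subgroup_le_iff_card_dvd.mpr (congrArg Subtype.val h).symm.dvd
    · obtain ⟨H, hH⟩ := exists_subgroup_card_eq (Nat.dvd_of_mem_divisors hd)
      exact ⟨H, Subtype.ext hH⟩
  rw [Nat.card_eq_of_bijective _ hbij, Nat.card_eq_finsetCard]

theorem krullDim_subgroup : Order.krullDim (Subgroup G) = Ω (Nat.card G) := by
  have hn : Nat.card G ≠ 0 := Nat.card_pos.ne'
  refine le_antisymm ?_ ?_
  · have hf : StrictMono fun H : Subgroup G => Ω (Nat.card H) := fun H K hHK => by
      obtain ⟨hdvd, hne⟩ := subgroup_lt_iff_card_dvd_ne.mp hHK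
      exact ArithmeticFunction.cardFactors_lt_of_dvd_of_ne hdvd hne Nat.card_pos.ne'
    exact Order.krullDim_le_of_strictMono_nat _ hf fun H => card_top (G := G) ▸ hf.monotone le_top
  · set L := (Nat.card G).primeFactorsList
    have hdvd (i : ℕ) : (L.take i).prod ∣ Nat.card G :=
      Nat.prod_primeFactorsList hn ▸ (L.take_sublist i).prod_dvd_prod
    choose H hH using fun i : Fin (L.length + 1) => exists_subgroup_card_eq (hdvd i)
    have hH_strictMono : StrictMono H := Fin.strictMono_iff_lt_succ.mpr fun i => by
      have hprime : L[i].Prime := Nat.prime_of_mem_primeFactorsList (L.getElem_mem i.2)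
      have hpos : 0 < (L.take i).prod := Nat.pos_of_dvd_of_pos (hdvd i) (Nat.pos_of_ne_zero hn)
      rw [subgroup_lt_iff_card_dvd_ne, hH, hH, Fin.val_succ, List.prod_take_succ _ _ i.2]
      exact ⟨dvd_mul_right _ _, (Nat.lt_mul_iff_one_lt_right hpos).mpr hprime.one_lt |>.ne⟩
    simpa [ArithmeticFunction.cardFactors_apply] using
      Order.LTSeries.length_le_krullDim (LTSeries.mk _ H hH_strictMono)

end IsCyclic

theorem isCyclic_of_inf_sup_left {G : Type*} [Group G] [Finite G]
    (h : ∀ A B C : Subgroup G, A ⊓ (B ⊔ C) = A ⊓ B ⊔ A ⊓ C) : IsCyclic G := by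
  have hcomm := commute_of_sup_inf_left (sup_inf_left_of_inf_sup_left h)
  let : CommGroup G := { mul_comm := fun a b => (hcomm a b).eq }
  exact CommGroup.isCyclic_of_mem_zpowers_of_orderOf_eq_prime fun p hp x y hx hy =>
    mem_zpowers_of_inf_sup_left h hp (hcomm x y) hx hy

/-- For a finite Galois extension `k ⊂ L` of degree `n = p₁^{e₁} ⋯ p_m^{e_m}` whose lattice
of intermediate fields is distributive, the extension is cyclic, the length of the lattice
of intermediate fields is `e₁ + ⋯ + e_m` (the number of prime factors of `n` counted with
multiplicity), and the number of intermediate fields is the number of divisors of `n`. -/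
theorem galois_distrib_cyclic_length_card {k L : Type*} [Field k] [Field L]
    [Algebra k L] [FiniteDimensional k L] [IsGalois k L]
    (hdistrib : ∀ A B C : IntermediateField k L, A ⊓ (B ⊔ C) = (A ⊓ B) ⊔ (A ⊓ C)) :
    IsCyclic (L ≃ₐ[k] L) ∧
      Order.krullDim (IntermediateField k L) =
        ((Module.finrank k L).primeFactorsList.length : ℕ) ∧
      Nat.card (IntermediateField k L) = (Module.finrank k L).divisors.card := by
  let e := IsGalois.intermediateFieldEquivSubgroup (F := k) (E := L)
  have hcyc : IsCyclic (L ≃ₐ[k] L) := isCyclic_of_inf_sup_left <|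
    e.inf_sup_left_of_sup_inf_left (sup_inf_left_of_inf_sup_left hdistrib)
  have hcard := IsGalois.card_aut_eq_finrank k L
  refine ⟨hcyc, ?_, ?_⟩
  · rw [Order.krullDim_eq_of_orderIso e, Order.krullDim_orderDual, IsCyclic.krullDim_subgroup,
      hcard, ArithmeticFunction.cardFactors_apply]
  · rw [Nat.card_congr e.toEquiv, ← hcard]
    exact IsCyclic.card_subgroup
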